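/- arXiv:2112.03125 — 3 statements merged into one kernel-verified Lean document; each statement's English description precedes it below -/
import Mathlib

section
/- Let k ≥ 0 and let P₁, P₂, P₃ ∈ 𝒫_{k−1} satisfy x P₁ + y P₂ + z P₃ = 0. If the row-wise divergence of M(P₁,P₂,P₃) is the gradient of some polynomial q ∈ 𝒫_k, i.e. Σ_{j=1}^{3} ∂_{x_j}(x_j P_i) = ∂_{x_i} q for i = 1, 2, 3, then P₁ = P₂ = P₃ = 0. -/
open MvPolynomial

noncomputable section

/-- Real polynomials in the three variables `x, y, z` (indexed `0, 1, 2`). -/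
abbrev P3 := MvPolynomial (Fin 3) ℝ

/-- Membership in `𝒫_m`, the space of polynomials of total degree at most `m`,
with the convention `𝒫_m = {0}` for `m < 0`. -/
def memP (m : ℤ) (p : P3) : Prop := p = 0 ∨ (p.totalDegree : ℤ) ≤ m

/-- The row-wise divergence of the matrix `M(P₁,P₂,P₃)` with entries `M i j = x_j * P i`:
its `i`-th component is `Σ_j ∂_{x_j} (x_j P_i)`. -/
def rowDiv (P : Fin 3 → P3) : Fin 3 → P3 := fun i => ∑ j : Fin 3, pderiv j (X j * P i)

/-!
Write `D p = ∑ⱼ ∂ⱼ (xⱼ p)` and `E p = ∑ⱼ xⱼ ∂ⱼ p` (the Euler operator, which multiplies each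
monomial by its degree), so that `D = n + E` in `n` variables. The product rule gives
`D (xₖ p) = xₖ D p + xₖ p`; applying `D` to `∑ₖ xₖ Pₖ = 0` therefore yields
`E q = ∑ₖ xₖ ∂ₖ q = ∑ₖ xₖ D Pₖ = 0`, so `q` is constant and `D Pᵢ = ∂ᵢ q = 0`.
Finally `D` is injective, as it multiplies each monomial by `n + degree > 0`.
-/

namespace MvPolynomial

variable {σ R : Type*} [Fintype σ] [CommSemiring R]

lemma coeff_sum_X_mul_pderiv (p : MvPolynomial σ R) (m : σ →₀ ℕ) :
    coeff m (∑ i, X i * pderiv i p) = m.degree • coeff m p := by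
  classical
  induction p using MvPolynomial.induction_on' with
  | monomial s a =>
    simp only [X_mul_pderiv_monomial, ← Finset.sum_smul, ← Finsupp.degree_eq_sum, coeff_smul,
      coeff_monomial]
    split_ifs with h <;> simp [h]
  | add p q hp hq =>
    simp only [map_add, mul_add, Finset.sum_add_distrib, coeff_add, hp, hq, smul_add]

lemma sum_pderiv_X_mul (p : MvPolynomial σ R) :
    ∑ i, pderiv i (X i * p) = Fintype.card σ • p + ∑ i, X i * pderiv i p := by
  simp only [pderiv_mul, pderiv_X_self, one_mul, Finset.sum_add_distrib, Finset.sum_const,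
    Finset.card_univ]

lemma coeff_sum_pderiv_X_mul (p : MvPolynomial σ R) (m : σ →₀ ℕ) :
    coeff m (∑ i, pderiv i (X i * p)) = (Fintype.card σ + m.degree) • coeff m p := by
  rw [sum_pderiv_X_mul, coeff_add, coeff_smul, coeff_sum_X_mul_pderiv, add_smul]

lemma sum_pderiv_X_mul_X_mul (p : MvPolynomial σ R) (k : σ) :
    ∑ i, pderiv i (X i * (X k * p)) = X k * ∑ i, pderiv i (X i * p) + X k * p := by
  classical
  have hk : ∀ i,
      pderiv i (X i * (X k * p)) = Pi.single k (X k * p) i + X k * pderiv i (X i * p) := by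
    intro i
    rw [mul_left_comm, pderiv_mul]
    by_cases hik : i = k
    · subst hik
      rw [pderiv_X_self, one_mul, Pi.single_eq_same]
    · rw [pderiv_X_of_ne (Ne.symm hik), zero_mul, Pi.single_eq_of_ne hik]
  rw [Finset.sum_congr rfl fun i _ => hk i, Finset.sum_add_distrib, Finset.sum_pi_single',
    if_pos (Finset.mem_univ k), Finset.mul_sum, add_comm]

lemma sum_pderiv_X_mul_sum_X_mul (P : σ → MvPolynomial σ R) :
    ∑ i, pderiv i (X i * ∑ k, X k * P k) =
      ∑ k, X k * ∑ i, pderiv i (X i * P k) + ∑ k, X k * P k := by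
  simp only [Finset.mul_sum, map_sum]
  rw [Finset.sum_comm]
  simp only [← Finset.mul_sum, sum_pderiv_X_mul_X_mul, Finset.sum_add_distrib]

variable [IsAddTorsionFree R]

lemma eq_C_of_sum_X_mul_pderiv_eq_zero {p : MvPolynomial σ R} (h : ∑ i, X i * pderiv i p = 0) :
    p = C (coeff 0 p) := by
  classical
  ext m
  rw [coeff_C]
  split_ifs with hm
  · rw [hm]
  · have := coeff_sum_X_mul_pderiv p m
    rw [h, coeff_zero, eq_comm, nsmul_eq_zero_iff_right] at this
    · exact this
    · simpa [Finsupp.degree_eq_zero_iff] using Ne.symm hm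

lemma eq_zero_of_sum_pderiv_X_mul_eq_zero [Nonempty σ] {p : MvPolynomial σ R}
    (h : ∑ i, pderiv i (X i * p) = 0) : p = 0 := by
  ext m
  have := coeff_sum_pderiv_X_mul p m
  rw [h, coeff_zero, eq_comm, nsmul_eq_zero_iff_right (by positivity)] at this
  exact this

end MvPolynomial

theorem trace_free_inter_gradient_trivial_general (P : Fin 3 → P3)
    (htr : X 0 * P 0 + X 1 * P 1 + X 2 * P 2 = 0)
    (q : P3)
    (hdiv : ∀ i, rowDiv P i = pderiv i q) :
    ∀ i, P i = 0 := by
  have htr' : ∑ k, X k * P k = 0 := by rwa [Fin.sum_univ_three]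
  have hEuler : ∑ i, X i * pderiv i q = 0 := by
    have := sum_pderiv_X_mul_sum_X_mul P
    simp only [htr', mul_zero, map_zero, Finset.sum_const_zero, add_zero] at this
    simpa only [← hdiv, rowDiv] using this.symm
  have hq : ∀ i, pderiv i q = 0 := fun i => by
    rw [eq_C_of_sum_X_mul_pderiv_eq_zero hEuler, pderiv_C]
  exact fun i => eq_zero_of_sum_pderiv_X_mul_eq_zero ((hdiv i).trans (hq i))

/-- If `P₁, P₂, P₃ ∈ 𝒫_{k-1}` satisfy `x P₁ + y P₂ + z P₃ = 0` and the row-wise divergence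
of `M(P₁,P₂,P₃)` is the gradient of some `q ∈ 𝒫_k`, then `P₁ = P₂ = P₃ = 0`. -/
theorem trace_free_inter_gradient_trivial (k : ℕ) (P : Fin 3 → P3)
    (hdeg : ∀ i, memP ((k : ℤ) - 1) (P i))
    (htr : X 0 * P 0 + X 1 * P 1 + X 2 * P 2 = 0)
    (q : P3) (hq : memP (k : ℤ) q)
    (hdiv : ∀ i, rowDiv P i = pderiv i q) :
    ∀ i, P i = 0 :=
  trace_free_inter_gradient_trivial_general P htr q hdiv
end
end

section
/- For all integers k ≥ 0, m ≥ 1 and every ρ ∈ (0,1] there exists a constant C > 0 depending only on k, m and ρ such that: for every bounded open convex polyhedron T ⊂ ℝ³ with m faces, of diameter h_T, containing an open ball of radius ρ h_T, and every polynomial q of total degree at most k, there exists a polynomial P of total degree at most k + m such that P vanishes at every point of the topological boundary of T, ∫_T P λ = ∫_T q λ for every polynomial λ of total degree at most k, and C⁻¹ ‖q‖_{L²(T)} ≤ ‖P‖_{L²(T)} ≤ C ‖q‖_{L²(T)}. -/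
open MvPolynomial MeasureTheory
open scoped RealInnerProductSpace

noncomputable section

/-- The `L²(T)` norm of (the function associated with) a polynomial `p`. -/
def polyL2norm (T : Set (EuclideanSpace ℝ (Fin 3))) (p : MvPolynomial (Fin 3) ℝ) : ℝ :=
  Real.sqrt (∫ x in T, (eval (fun i => x i) p) ^ 2)

/-!
The lift is `P = Λ · b`, where `b = ∏ᵢ (⟪vᵢ, x⟫ + cᵢ)` is the bubble of `T`: it vanishes on
`∂T`, is positive in `T`, at most `h_T ^ m` on `T` and at least `(ρ h_T / 2) ^ m` on the ball
`B = B(x₀, ρ h_T / 2)`. The polynomial `Λ` of degree `≤ k` solves the moment problem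
`∫_T Λ μ b = ∫_T q μ` for all `μ` of degree `≤ k`; this Gram system is solvable because the
weighted form `∫_T Λ μ b` is positive definite.

Testing with `μ = q` gives `‖q‖ ≤ ‖P‖`. Testing with `μ = Λ` gives
`‖P‖² ≤ h_T ^ m ∫_T Λ² b = h_T ^ m ⟪q, Λ⟫ ≤ h_T ^ m ‖q‖ ‖Λ‖_T`, while
`‖Λ‖_T ≤ K ‖Λ‖_B ≤ K ‖P‖ / (ρ h_T / 2) ^ m`. The constant `K` comes from the equivalence of
norms on the finite-dimensional space of polynomials of degree `≤ k`, applied to two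
concentric balls with radius ratio `4 / ρ` and transported to centre `x₀` and scale `h_T` by
an affine change of variables, so it does not depend on `T`.
-/

open Metric Bornology Set

theorem Continuous.integrableOn_of_isBounded {X E : Type*} [MetricSpace X] [ProperSpace X]
    [MeasurableSpace X] [OpensMeasurableSpace X] {μ : Measure X} [IsFiniteMeasureOnCompacts μ]
    [NormedAddCommGroup E] {f : X → E} (hf : Continuous f) {s : Set X} (hs : IsBounded s) :
    IntegrableOn f s μ :=
  (hf.continuousOn.integrableOn_compact hs.isCompact_closure).mono_set subset_closure

theorem IsOpen.diam_pos {E : Type*} [NormedAddCommGroup E] [NormedSpace ℝ E] [Nontrivial E]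
    {s : Set E} (hs : IsOpen s) (hne : s.Nonempty) (hb : IsBounded s) : 0 < diam s := by
  obtain ⟨z, hz⟩ := hne
  obtain ⟨ε, hε, hball⟩ := Metric.isOpen_iff.mp hs z hz
  calc 0 < 2 * ε := by positivity
    _ = diam (ball z ε) := (diam_ball_eq z hε.le).symm
    _ ≤ diam s := diam_mono hball hb

theorem setIntegral_ball_eq_smul_setIntegral_comp {E : Type*} [NormedAddCommGroup E]
    [NormedSpace ℝ E] [MeasurableSpace E] [BorelSpace E] [FiniteDimensional ℝ E]
    (μ : Measure E) [μ.IsAddHaarMeasure] (g : E → ℝ) (x₀ : E) {t : ℝ} (ht : 0 < t) (r : ℝ) :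
    ∫ x in ball x₀ (t * r), g x ∂μ =
      t ^ Module.finrank ℝ E * ∫ y in ball 0 r, g (x₀ + t • y) ∂μ := by
  have hscale := Measure.setIntegral_comp_smul_of_pos μ (fun z => g (x₀ + z)) (ball 0 r) ht
  rw [_root_.smul_ball ht.ne', smul_zero, Real.norm_of_nonneg ht.le, smul_eq_mul] at hscale
  have htranslate := (measurePreserving_add_left μ x₀).setIntegral_preimage_emb
    (MeasurableEquiv.addLeft x₀).measurableEmbedding g (ball x₀ (t * r))
  rw [hscale, ← htranslate, mul_inv_cancel_left₀ (pow_pos ht _).ne']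
  congr 2
  ext z
  simp [dist_eq_norm]

theorem norm_le_norm_of_inner_eq_inner_self {H : Type*} [NormedAddCommGroup H]
    [InnerProductSpace ℝ H] {x y : H} (h : ⟪x, y⟫ = ⟪y, y⟫) : ‖y‖ ≤ ‖x‖ := by
  have hsq : ‖y‖ * ‖y‖ ≤ ‖x‖ * ‖y‖ := by
    rw [← real_inner_self_eq_norm_mul_norm, ← h]
    exact real_inner_le_norm x y
  nlinarith [norm_nonneg x, norm_nonneg y]

theorem exists_forall_inner_eq_of_anisotropic {V H : Type*} [AddCommGroup V] [Module ℝ V]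
    [FiniteDimensional ℝ V] [NormedAddCommGroup H] [InnerProductSpace ℝ H] (S J : V →ₗ[ℝ] H)
    (hSJ : ∀ v, ⟪S v, J v⟫ = 0 → v = 0) (h : H) : ∃ v, ∀ u, ⟪S v, J u⟫ = ⟪h, J u⟫ := by
  let B : LinearMap.BilinForm ℝ V := (innerₗ H).compl₁₂ S J
  have hB : B.Nondegenerate := ⟨fun v hv => hSJ v (hv v), fun u hu => hSJ u (hu u)⟩
  exact ⟨(B.toDual hB).symm ((innerₗ H h) ∘ₗ J), fun u => B.apply_toDual_symm_apply _ u⟩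

theorem LinearMap.exists_norm_le_mul_norm_of_injective {𝕜 V E F : Type*}
    [NontriviallyNormedField 𝕜] [CompleteSpace 𝕜] [AddCommGroup V] [Module 𝕜 V]
    [FiniteDimensional 𝕜 V] [NormedAddCommGroup E] [NormedSpace 𝕜 E] [NormedAddCommGroup F]
    [NormedSpace 𝕜 F] (A : V →ₗ[𝕜] E) (hA : Function.Injective A) (B : V →ₗ[𝕜] F) :
    ∃ C ≥ 0, ∀ v, ‖B v‖ ≤ C * ‖A v‖ := by
  let e := LinearEquiv.ofInjective A hA
  let g := (B ∘ₗ e.symm.toLinearMap).toContinuousLinearMap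
  refine ⟨‖g‖, norm_nonneg g, fun v => ?_⟩
  calc ‖B v‖ = ‖g (e v)‖ := by simp [g]
    _ ≤ ‖g‖ * ‖e v‖ := g.le_opNorm (e v)
    _ = ‖g‖ * ‖A v‖ := rfl

theorem MvPolynomial.totalDegree_aeval_le {σ τ R : Type*} [CommSemiring R]
    {g : σ → MvPolynomial τ R} (hg : ∀ i, (g i).totalDegree ≤ 1) (p : MvPolynomial σ R) :
    (aeval g p).totalDegree ≤ p.totalDegree := by
  conv_lhs => rw [p.as_sum, map_sum]
  refine (totalDegree_finsetSum _ _).trans (Finset.sup_le fun d hd => ?_)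
  rw [aeval_monomial, ← Algebra.smul_def]
  refine (totalDegree_smul_le _ _).trans ((totalDegree_finsetProd _ _).trans ?_)
  exact (Finset.sum_le_sum fun i _ => (totalDegree_pow _ _).trans
    (mul_le_of_le_one_right' (hg i))).trans (le_totalDegree hd)

section Polyhedron

variable {F : Type*} [NormedAddCommGroup F] [InnerProductSpace ℝ F]

theorem le_inner_add_of_ball_subset {v x : F} {c r : ℝ} (hv : ‖v‖ = 1) (hr : 0 < r)
    (h : ball x r ⊆ {y | 0 < ⟪v, y⟫ + c}) : r ≤ ⟪v, x⟫ + c := by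
  by_contra! hlt
  set a := ⟪v, x⟫ + c
  have ha : 0 < a := h (mem_ball_self hr)
  have hmem : x - a • v ∈ ball x r := by
    rwa [mem_ball, dist_eq_norm, sub_sub_cancel_left, norm_neg, norm_smul, hv, mul_one,
      Real.norm_of_nonneg ha.le]
  have := h hmem
  simp only [mem_ofPred_eq, inner_sub_right, real_inner_smul_right, real_inner_self_eq_norm_sq,
    hv] at this
  linarith

theorem inner_add_le_dist {v y : F} {c : ℝ} (hv : ‖v‖ = 1) (hy : ⟪v, y⟫ + c = 0) (x : F) :
    ⟪v, x⟫ + c ≤ dist x y := by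
  calc ⟪v, x⟫ + c = ⟪v, x - y⟫ := by rw [inner_sub_right]; linarith
    _ ≤ ‖v‖ * ‖x - y‖ := real_inner_le_norm v (x - y)
    _ = dist x y := by rw [hv, one_mul, dist_eq_norm]

variable {κ : Type*} [Finite κ]

def openPolyhedron (v : κ → F) (c : κ → ℝ) : Set F := {x | ∀ i, 0 < ⟪v i, x⟫ + c i}

theorem isOpen_openPolyhedron (v : κ → F) (c : κ → ℝ) : IsOpen (openPolyhedron v c) := by
  simp only [openPolyhedron, ofPred_forall]
  exact isOpen_iInter_of_finite fun i => isOpen_lt continuous_const (by fun_prop)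

theorem exists_inner_add_eq_zero_of_mem_frontier {v : κ → F} {c : κ → ℝ} {x : F}
    (hx : x ∈ frontier (openPolyhedron v c)) : ∃ i, ⟪v i, x⟫ + c i = 0 := by
  rw [(isOpen_openPolyhedron v c).frontier_eq] at hx
  obtain ⟨hxcl, hxT⟩ := hx
  have hclosed : IsClosed {x : F | ∀ i, 0 ≤ ⟪v i, x⟫ + c i} := by
    simp only [ofPred_forall]
    exact isClosed_iInter fun i => isClosed_le continuous_const (by fun_prop)
  have hge := closure_minimal (fun y hy i => (hy i).le) hclosed hxcl
  simp only [openPolyhedron, mem_ofPred_eq, not_forall, not_lt] at hxT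
  obtain ⟨i, hi⟩ := hxT
  exact ⟨i, le_antisymm hi (hge i)⟩

end Polyhedron

variable {ι : Type*}

def polyFun : MvPolynomial ι ℝ →ₐ[ℝ] (EuclideanSpace ℝ ι → ℝ) :=
  aeval fun i x => x i

@[simp]
theorem polyFun_apply (p : MvPolynomial ι ℝ) (x : EuclideanSpace ℝ ι) :
    polyFun p x = eval (fun i => x i) p := by
  induction p using MvPolynomial.induction_on <;> simp_all [polyFun]

def rescale (x₀ : EuclideanSpace ℝ ι) (t : ℝ) : MvPolynomial ι ℝ →ₐ[ℝ] MvPolynomial ι ℝ :=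
  aeval fun j => C (x₀ j) + C t * X j

theorem totalDegree_rescale_le (x₀ : EuclideanSpace ℝ ι) (t : ℝ) (p : MvPolynomial ι ℝ) :
    (rescale x₀ t p).totalDegree ≤ p.totalDegree :=
  totalDegree_aeval_le (fun j => (totalDegree_add _ _).trans
    (max_le (by simp) ((totalDegree_mul _ _).trans (by simp)))) p

theorem polyFun_rescale (x₀ : EuclideanSpace ℝ ι) (t : ℝ) (p : MvPolynomial ι ℝ)
    (y : EuclideanSpace ℝ ι) : polyFun (rescale x₀ t p) y = polyFun p (x₀ + t • y) := by
  induction p using MvPolynomial.induction_on <;> simp_all [rescale]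

variable [Fintype ι]

theorem analyticOnNhd_polyFun (p : MvPolynomial ι ℝ) : AnalyticOnNhd ℝ (polyFun p) univ := by
  let π (i : ι) : EuclideanSpace ℝ ι →L[ℝ] ℝ := EuclideanSpace.proj i
  rw [show polyFun p = fun x => eval (fun i => π i x) p from funext (polyFun_apply p)]
  exact AnalyticOnNhd.eval_continuousLinearMap' π p

@[fun_prop]
theorem continuous_polyFun (p : MvPolynomial ι ℝ) : Continuous (polyFun p) :=
  continuousOn_univ.mp (analyticOnNhd_polyFun p).continuousOn

theorem eq_zero_of_eqOn_zero {p : MvPolynomial ι ℝ} {U : Set (EuclideanSpace ℝ ι)}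
    (hU : IsOpen U) (hne : U.Nonempty) (h : EqOn (polyFun p) 0 U) : p = 0 := by
  obtain ⟨z, hz⟩ := hne
  have hzero := (analyticOnNhd_polyFun p).eqOn_zero_of_preconnected_of_eventuallyEq_zero
    isPreconnected_univ (mem_univ z) (Filter.eventually_of_mem (hU.mem_nhds hz) h)
  exact MvPolynomial.funext fun x => by simpa using hzero (mem_univ (WithLp.toLp 2 x))

section Bubble

def affinePoly (v : EuclideanSpace ℝ ι) (c : ℝ) : MvPolynomial ι ℝ :=
  C c + ∑ j, C (v j) * X j

theorem polyFun_affinePoly (v : EuclideanSpace ℝ ι) (c : ℝ) (x : EuclideanSpace ℝ ι) :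
    polyFun (affinePoly v c) x = ⟪v, x⟫ + c := by
  simp [affinePoly, PiLp.inner_apply, add_comm, mul_comm]

theorem totalDegree_affinePoly_le (v : EuclideanSpace ℝ ι) (c : ℝ) :
    (affinePoly v c).totalDegree ≤ 1 :=
  (totalDegree_add _ _).trans (max_le (by simp) ((totalDegree_finsetSum _ _).trans
    (Finset.sup_le fun j _ => (totalDegree_mul _ _).trans (by simp))))

variable {κ : Type*} [Fintype κ] (v : κ → EuclideanSpace ℝ ι) (c : κ → ℝ)

def bubble : MvPolynomial ι ℝ := ∏ i, affinePoly (v i) (c i)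

theorem polyFun_bubble (x : EuclideanSpace ℝ ι) :
    polyFun (bubble v c) x = ∏ i, (⟪v i, x⟫ + c i) := by
  simp only [bubble, map_prod, Finset.prod_apply, polyFun_affinePoly]

theorem totalDegree_bubble_le : (bubble v c).totalDegree ≤ Fintype.card κ :=
  (totalDegree_finsetProd _ _).trans ((Finset.sum_le_sum fun i _ =>
    totalDegree_affinePoly_le (v i) (c i)).trans (by simp))

variable {v c}

theorem polyFun_bubble_pos {x : EuclideanSpace ℝ ι} (hx : x ∈ openPolyhedron v c) :
    0 < polyFun (bubble v c) x := by
  rw [polyFun_bubble]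
  exact Finset.prod_pos fun i _ => hx i

theorem polyFun_bubble_eq_zero_of_mem_frontier {x : EuclideanSpace ℝ ι}
    (hx : x ∈ frontier (openPolyhedron v c)) : polyFun (bubble v c) x = 0 := by
  obtain ⟨i, hi⟩ := exists_inner_add_eq_zero_of_mem_frontier hx
  rw [polyFun_bubble]
  exact Finset.prod_eq_zero (Finset.mem_univ i) hi

theorem polyFun_bubble_le_diam_pow (hv : ∀ i, ‖v i‖ = 1)
    (hb : IsBounded (openPolyhedron v c))
    (hfaces : ∀ i, ∃ y ∈ closure (openPolyhedron v c), ⟪v i, y⟫ + c i = 0)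
    {x : EuclideanSpace ℝ ι} (hx : x ∈ openPolyhedron v c) :
    polyFun (bubble v c) x ≤ diam (openPolyhedron v c) ^ Fintype.card κ := by
  rw [polyFun_bubble, ← Finset.card_univ, ← Finset.prod_const]
  refine Finset.prod_le_prod (fun i _ => (hx i).le) fun i _ => ?_
  obtain ⟨y, hy, hyi⟩ := hfaces i
  rw [← diam_closure]
  exact (inner_add_le_dist (hv i) hyi x).trans
    (dist_le_diam_of_mem hb.closure (subset_closure hx) hy)

theorem pow_le_polyFun_bubble (hv : ∀ i, ‖v i‖ = 1) {x : EuclideanSpace ℝ ι} {r : ℝ}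
    (hr : 0 < r) (hball : ball x r ⊆ openPolyhedron v c) :
    r ^ Fintype.card κ ≤ polyFun (bubble v c) x := by
  rw [polyFun_bubble, ← Finset.card_univ, ← Finset.prod_const]
  exact Finset.prod_le_prod (fun _ _ => hr.le) fun i _ =>
    le_inner_add_of_ball_subset (hv i) hr fun y hy => hball hy i

end Bubble

section L2

variable {s : Set (EuclideanSpace ℝ ι)}

theorem memLp_two_polyFun (hs : IsBounded s) (p : MvPolynomial ι ℝ) :
    MemLp (polyFun p) 2 (volume.restrict s) :=
  (memLp_two_iff_integrable_sq (continuous_polyFun p).aestronglyMeasurable).mpr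
    (((continuous_polyFun p).pow 2).integrableOn_of_isBounded hs)

def polyL2 (hs : IsBounded s) : MvPolynomial ι ℝ →ₗ[ℝ] Lp ℝ 2 (volume.restrict s) where
  toFun p := (memLp_two_polyFun hs p).toLp
  map_add' p q := by
    rw [← MemLp.toLp_add]
    exact MemLp.toLp_congr _ _ (by simp)
  map_smul' a p := by
    rw [RingHom.id_apply, ← MemLp.toLp_const_smul]
    exact MemLp.toLp_congr _ _ (by simp)

theorem inner_polyL2 (hs : IsBounded s) (p q : MvPolynomial ι ℝ) :
    ⟪polyL2 hs p, polyL2 hs q⟫ = ∫ x in s, polyFun p x * polyFun q x := by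
  rw [L2.inner_def]
  refine integral_congr_ae ?_
  filter_upwards [(memLp_two_polyFun hs p).coeFn_toLp, (memLp_two_polyFun hs q).coeFn_toLp]
    with x hpx hqx
  simp [polyL2, hpx, hqx, mul_comm]

theorem norm_polyL2 (hs : IsBounded s) (p : MvPolynomial ι ℝ) :
    ‖polyL2 hs p‖ = √(∫ x in s, polyFun p x ^ 2) := by
  simp_rw [norm_eq_sqrt_real_inner, inner_polyL2, sq]

theorem norm_polyL2_mono {t : Set (EuclideanSpace ℝ ι)} (hs : IsBounded s) (ht : IsBounded t)
    (hst : s ⊆ t) (p : MvPolynomial ι ℝ) : ‖polyL2 hs p‖ ≤ ‖polyL2 ht p‖ := by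
  rw [norm_polyL2, norm_polyL2]
  exact Real.sqrt_le_sqrt (setIntegral_mono_set
    (((continuous_polyFun p).pow 2).integrableOn_of_isBounded ht)
    (Filter.Eventually.of_forall fun x => sq_nonneg _) hst.eventuallyLE)

theorem eq_zero_of_inner_polyL2_mul_eq_zero (hso : IsOpen s) (hs : IsBounded s)
    (hne : s.Nonempty) {w : MvPolynomial ι ℝ} (hw : ∀ x ∈ s, 0 < polyFun w x)
    {p : MvPolynomial ι ℝ} (h : ⟪polyL2 hs (p * w), polyL2 hs p⟫ = 0) : p = 0 := by
  rw [inner_polyL2] at h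
  have hcont : Continuous fun x => polyFun (p * w) x * polyFun p x := by fun_prop
  have hnonneg : 0 ≤ᵐ[volume.restrict s] fun x => polyFun (p * w) x * polyFun p x := by
    refine (ae_restrict_iff' hso.measurableSet).mpr (Filter.Eventually.of_forall fun x hx => ?_)
    simpa [map_mul, mul_right_comm] using mul_nonneg (mul_self_nonneg (polyFun p x)) (hw x hx).le
  have hzero := (integral_eq_zero_iff_of_nonneg_ae hnonneg
    (hcont.integrableOn_of_isBounded hs)).mp h
  refine eq_zero_of_eqOn_zero hso hne fun x hx => ?_
  have := Measure.eqOn_open_of_ae_eq hzero hso hcont.continuousOn continuousOn_const hx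
  simp only [map_mul, Pi.mul_apply, Pi.zero_apply] at this ⊢
  simpa only [mul_eq_zero, (hw x hx).ne', or_false, or_self] using this

theorem polyL2_injective (hso : IsOpen s) (hs : IsBounded s) (hne : s.Nonempty) :
    Function.Injective (polyL2 hs) := by
  refine (injective_iff_map_eq_zero _).mpr fun p hp =>
    eq_zero_of_inner_polyL2_mul_eq_zero hso hs hne (w := 1) (by simp) ?_
  rw [mul_one, hp, inner_zero_left]

theorem exists_inner_polyL2_mul_eq (hso : IsOpen s) (hs : IsBounded s) (hne : s.Nonempty)
    {w : MvPolynomial ι ℝ} (hw : ∀ x ∈ s, 0 < polyFun w x) (k : ℕ) (q : MvPolynomial ι ℝ) :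
    ∃ Λ : MvPolynomial ι ℝ, Λ.totalDegree ≤ k ∧ ∀ μ : MvPolynomial ι ℝ, μ.totalDegree ≤ k →
      ⟪polyL2 hs (Λ * w), polyL2 hs μ⟫ = ⟪polyL2 hs q, polyL2 hs μ⟫ := by
  let V := restrictTotalDegree ι ℝ k
  obtain ⟨Λ, hΛ⟩ := exists_forall_inner_eq_of_anisotropic
    (polyL2 hs ∘ₗ LinearMap.mulRight ℝ w ∘ₗ V.subtype) (polyL2 hs ∘ₗ V.subtype)
    (fun v hv => Subtype.ext (eq_zero_of_inner_polyL2_mul_eq_zero hso hs hne hw hv))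
    (polyL2 hs q)
  exact ⟨Λ, (mem_restrictTotalDegree _ _ _).mp Λ.2,
    fun μ hμ => hΛ ⟨μ, (mem_restrictTotalDegree _ _ _).mpr hμ⟩⟩

theorem exists_norm_polyL2_le_of_totalDegree_le (k : ℕ) {U S : Set (EuclideanSpace ℝ ι)}
    (hU : IsOpen U) (hUne : U.Nonempty) (hUb : IsBounded U) (hS : IsBounded S) :
    ∃ C ≥ 0, ∀ p : MvPolynomial ι ℝ, p.totalDegree ≤ k →
      ‖polyL2 hS p‖ ≤ C * ‖polyL2 hUb p‖ := by
  let V := restrictTotalDegree ι ℝ k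
  obtain ⟨C, hC, hCle⟩ := LinearMap.exists_norm_le_mul_norm_of_injective
    (polyL2 hUb ∘ₗ V.subtype) ((polyL2_injective hU hUb hUne).comp Subtype.val_injective)
    (polyL2 hS ∘ₗ V.subtype)
  exact ⟨C, hC, fun p hp => hCle ⟨p, (mem_restrictTotalDegree _ _ _).mpr hp⟩⟩

theorem norm_polyL2_ball_eq (x₀ : EuclideanSpace ℝ ι) {t : ℝ} (ht : 0 < t) (r : ℝ)
    (p : MvPolynomial ι ℝ) :
    ‖polyL2 (isBounded_ball (x := x₀) (r := t * r)) p‖ =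
      √(t ^ Fintype.card ι) * ‖polyL2 (isBounded_ball (x := 0) (r := r)) (rescale x₀ t p)‖ := by
  simp_rw [norm_polyL2, setIntegral_ball_eq_smul_setIntegral_comp volume _ x₀ ht r,
    finrank_euclideanSpace, polyFun_rescale]
  exact Real.sqrt_mul (pow_nonneg ht.le _) _

theorem exists_norm_polyL2_ball_le (k : ℕ) {r : ℝ} (hr : 0 < r) (R : ℝ) :
    ∃ C ≥ 0, ∀ (x₀ : EuclideanSpace ℝ ι) {t : ℝ}, 0 < t → ∀ p : MvPolynomial ι ℝ,
      p.totalDegree ≤ k →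
      ‖polyL2 (isBounded_ball (x := x₀) (r := t * R)) p‖ ≤
        C * ‖polyL2 (isBounded_ball (x := x₀) (r := t * r)) p‖ := by
  obtain ⟨C, hC, hCle⟩ := exists_norm_polyL2_le_of_totalDegree_le k isOpen_ball
    (nonempty_ball.mpr hr) isBounded_ball (isBounded_ball (x := (0 : EuclideanSpace ℝ ι)) (r := R))
  refine ⟨C, hC, fun x₀ t ht p hp => ?_⟩
  rw [norm_polyL2_ball_eq x₀ ht, norm_polyL2_ball_eq x₀ ht, mul_left_comm]
  exact mul_le_mul_of_nonneg_left (hCle _ ((totalDegree_rescale_le x₀ t p).trans hp))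
    (Real.sqrt_nonneg _)

theorem norm_polyL2_mul_sq_le (hs : IsBounded s) (hsm : MeasurableSet s) {w : MvPolynomial ι ℝ}
    {M : ℝ} (hw : ∀ x ∈ s, 0 ≤ polyFun w x ∧ polyFun w x ≤ M) (p : MvPolynomial ι ℝ) :
    ‖polyL2 hs (p * w)‖ ^ 2 ≤ M * ⟪polyL2 hs (p * w), polyL2 hs p⟫ := by
  rw [← real_inner_self_eq_norm_sq, inner_polyL2, inner_polyL2, ← integral_const_mul]
  refine setIntegral_mono_on ((by fun_prop : Continuous _).integrableOn_of_isBounded hs)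
    ((by fun_prop : Continuous _).integrableOn_of_isBounded hs) hsm fun x hx => ?_
  obtain ⟨hw₀, hwM⟩ := hw x hx
  simp only [map_mul, Pi.mul_apply]
  nlinarith [mul_le_mul_of_nonneg_left hwM (mul_nonneg (mul_self_nonneg (polyFun p x)) hw₀)]

theorem mul_norm_polyL2_le_norm_polyL2_mul (hs : IsBounded s) (hsm : MeasurableSet s)
    {w : MvPolynomial ι ℝ} {β : ℝ} (hβ : 0 ≤ β) (hw : ∀ x ∈ s, β ≤ polyFun w x)
    (p : MvPolynomial ι ℝ) : β * ‖polyL2 hs p‖ ≤ ‖polyL2 hs (p * w)‖ := by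
  rw [norm_polyL2, norm_polyL2, ← Real.sqrt_sq hβ, ← Real.sqrt_mul (sq_nonneg β),
    ← integral_const_mul]
  refine Real.sqrt_le_sqrt (setIntegral_mono_on
    ((continuous_const.mul ((continuous_polyFun _).pow 2)).integrableOn_of_isBounded hs)
    (((continuous_polyFun _).pow 2).integrableOn_of_isBounded hs) hsm fun x hx => ?_)
  rw [map_mul, Pi.mul_apply, mul_pow, mul_comm]
  exact mul_le_mul_of_nonneg_left (pow_le_pow_left₀ hβ (hw x hx) 2) (sq_nonneg _)

theorem mul_norm_polyL2_mul_le {U : Set (EuclideanSpace ℝ ι)} (hs : IsBounded s)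
    (hsm : MeasurableSet s) (hU : IsBounded U) (hUm : MeasurableSet U) (hUs : U ⊆ s)
    {w Λ q : MvPolynomial ι ℝ} {M β K : ℝ} (hM : 0 ≤ M) (hβ : 0 < β) (hK : 0 ≤ K)
    (hwM : ∀ x ∈ s, 0 ≤ polyFun w x ∧ polyFun w x ≤ M) (hβw : ∀ x ∈ U, β ≤ polyFun w x)
    (hΛ : ‖polyL2 hs Λ‖ ≤ K * ‖polyL2 hU Λ‖)
    (hmom : ⟪polyL2 hs (Λ * w), polyL2 hs Λ⟫ = ⟪polyL2 hs q, polyL2 hs Λ⟫) :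
    β * ‖polyL2 hs (Λ * w)‖ ≤ M * K * ‖polyL2 hs q‖ := by
  set P := polyL2 hs (Λ * w)
  have hΛP : β * ‖polyL2 hs Λ‖ ≤ K * ‖P‖ :=
    calc β * ‖polyL2 hs Λ‖ ≤ β * (K * ‖polyL2 hU Λ‖) := by gcongr
      _ = K * (β * ‖polyL2 hU Λ‖) := by ring
      _ ≤ K * ‖polyL2 hU (Λ * w)‖ := by
        gcongr; exact mul_norm_polyL2_le_norm_polyL2_mul hU hUm hβ.le hβw Λ
      _ ≤ K * ‖P‖ := by gcongr; exact norm_polyL2_mono hU hs hUs _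
  have hPP : β * ‖P‖ * ‖P‖ ≤ M * K * ‖polyL2 hs q‖ * ‖P‖ :=
    calc β * ‖P‖ * ‖P‖ = β * ‖P‖ ^ 2 := by ring
      _ ≤ β * (M * ⟪polyL2 hs q, polyL2 hs Λ⟫) := by
        rw [← hmom]; gcongr; exact norm_polyL2_mul_sq_le hs hsm hwM Λ
      _ ≤ β * (M * (‖polyL2 hs q‖ * ‖polyL2 hs Λ‖)) := by
        gcongr; exact real_inner_le_norm _ _
      _ = M * ‖polyL2 hs q‖ * (β * ‖polyL2 hs Λ‖) := by ring
      _ ≤ M * ‖polyL2 hs q‖ * (K * ‖P‖) := by gcongr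
      _ = M * K * ‖polyL2 hs q‖ * ‖P‖ := by ring
  rcases (norm_nonneg P).eq_or_lt with hP | hP
  · rw [← hP, mul_zero]; positivity
  · exact le_of_mul_le_mul_right hPP hP

theorem norm_polyL2_mul_bubble_le {κ : Type*} [Fintype κ] {v : κ → EuclideanSpace ℝ ι}
    {c : κ → ℝ} (hv : ∀ i, ‖v i‖ = 1) (hb : IsBounded (openPolyhedron v c))
    (hfaces : ∀ i, ∃ y ∈ closure (openPolyhedron v c), ⟪v i, y⟫ + c i = 0)
    (hdiam : 0 < diam (openPolyhedron v c)) {x₀ : EuclideanSpace ℝ ι} {ρ : ℝ} (hρ : 0 < ρ)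
    (hx₀ : ball x₀ (ρ * diam (openPolyhedron v c)) ⊆ openPolyhedron v c)
    {Λ q : MvPolynomial ι ℝ} {K : ℝ} (hK : 0 ≤ K)
    (hΛ : ‖polyL2 (isBounded_ball (x := x₀) (r := diam (openPolyhedron v c) * 2)) Λ‖ ≤
      K * ‖polyL2 (isBounded_ball (x := x₀) (r := diam (openPolyhedron v c) * (ρ / 2))) Λ‖)
    (hmom : ⟪polyL2 hb (Λ * bubble v c), polyL2 hb Λ⟫ = ⟪polyL2 hb q, polyL2 hb Λ⟫) :
    ‖polyL2 hb (Λ * bubble v c)‖ ≤ K * (2 / ρ) ^ Fintype.card κ * ‖polyL2 hb q‖ := by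
  set T := openPolyhedron v c
  set h := diam T
  set n := Fintype.card κ
  have hx₀T : x₀ ∈ T := hx₀ (mem_ball_self (by positivity))
  have hTball : T ⊆ ball x₀ (h * 2) := fun x hx => by
    rw [mem_ball]; linarith [dist_le_diam_of_mem hb hx hx₀T]
  have hUball : ∀ x ∈ ball x₀ (h * (ρ / 2)), ball x (h * (ρ / 2)) ⊆ T := fun x hx =>
    (ball_subset_ball' (by rw [mem_ball] at hx; linarith)).trans hx₀
  have hupper := mul_norm_polyL2_mul_le hb (isOpen_openPolyhedron v c).measurableSet
    isBounded_ball measurableSet_ball ((ball_subset_ball (by nlinarith)).trans hx₀)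
    (pow_nonneg hdiam.le n) (pow_pos (by positivity : 0 < h * (ρ / 2)) n) hK
    (fun x hx => ⟨(polyFun_bubble_pos hx).le, polyFun_bubble_le_diam_pow hv hb hfaces hx⟩)
    (fun x hx => pow_le_polyFun_bubble hv (by positivity) (hUball x hx))
    ((norm_polyL2_mono hb isBounded_ball hTball Λ).trans hΛ) hmom
  rw [mul_pow, mul_assoc, mul_assoc] at hupper
  calc ‖polyL2 hb (Λ * bubble v c)‖
      = (2 / ρ) ^ n * ((ρ / 2) ^ n * ‖polyL2 hb (Λ * bubble v c)‖) := by
        rw [← mul_assoc, ← mul_pow, show 2 / ρ * (ρ / 2) = 1 by field_simp, one_pow, one_mul]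
    _ ≤ (2 / ρ) ^ n * (K * ‖polyL2 hb q‖) :=
        mul_le_mul_of_nonneg_left (le_of_mul_le_mul_left hupper (pow_pos hdiam n))
          (by positivity)
    _ = K * (2 / ρ) ^ n * ‖polyL2 hb q‖ := by ring

end L2

theorem polyL2norm_eq_norm_polyL2 {T : Set (EuclideanSpace ℝ (Fin 3))} (hT : IsBounded T)
    (p : MvPolynomial (Fin 3) ℝ) : polyL2norm T p = ‖polyL2 hT p‖ := by
  simp [polyL2norm, norm_polyL2]

/-- Boundary-vanishing polynomial lift: on a bounded open convex polyhedron `T ⊂ ℝ³` with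
`m` faces containing a ball of radius `ρ · h_T`, every polynomial `q` of degree at most `k`
has a lift `P` of degree at most `k + m` vanishing on `∂T`, with the same moments against
polynomials of degree at most `k`, and with comparable `L²(T)` norm, uniformly over such
polyhedra. -/
theorem boundary_vanishing_lift (k m : ℕ) (hm : 1 ≤ m) (ρ : ℝ)
    (hρ : ρ ∈ Set.Ioc (0 : ℝ) 1) :
    ∃ C > (0 : ℝ),
      ∀ (v : Fin m → EuclideanSpace ℝ (Fin 3)) (c : Fin m → ℝ), (∀ i, ‖v i‖ = 1) →
      ∀ T : Set (EuclideanSpace ℝ (Fin 3)), T = {x | ∀ i, 0 < ⟪v i, x⟫ + c i} →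
        Bornology.IsBounded T →
        (∀ i, ∃ y ∈ closure T, ⟪v i, y⟫ + c i = 0) →
        (∃ x₀, Metric.ball x₀ (ρ * Metric.diam T) ⊆ T) →
        ∀ q : MvPolynomial (Fin 3) ℝ, q.totalDegree ≤ k →
          ∃ P : MvPolynomial (Fin 3) ℝ, P.totalDegree ≤ k + m ∧
            (∀ x ∈ frontier T, eval (fun i => x i) P = 0) ∧
            (∀ lam : MvPolynomial (Fin 3) ℝ, lam.totalDegree ≤ k →
              ∫ x in T, eval (fun i => x i) P * eval (fun i => x i) lam =
              ∫ x in T, eval (fun i => x i) q * eval (fun i => x i) lam) ∧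
            C⁻¹ * polyL2norm T q ≤ polyL2norm T P ∧
            polyL2norm T P ≤ C * polyL2norm T q := by
  obtain ⟨K, hK₀, hK⟩ := exists_norm_polyL2_ball_le (ι := Fin 3) k (half_pos hρ.1) 2
  refine ⟨max (K * (2 / ρ) ^ m) 1, by positivity, ?_⟩
  rintro v c hv T hT hTb hfaces ⟨x₀, hx₀⟩ q hq
  replace hT : T = openPolyhedron v c := hT
  subst hT
  have hTo := isOpen_openPolyhedron v c
  obtain ⟨y, hy, -⟩ := hfaces ⟨0, hm⟩
  have hTne := closure_nonempty_iff.mp ⟨y, hy⟩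
  have hdiam := hTo.diam_pos hTne hTb
  obtain ⟨Λ, hΛdeg, hΛ⟩ := exists_inner_polyL2_mul_eq hTo hTb hTne
    (fun x hx => polyFun_bubble_pos hx) k q
  have hupper := norm_polyL2_mul_bubble_le hv hTb hfaces hdiam hρ.1 hx₀ hK₀
    (hK x₀ hdiam Λ hΛdeg) (hΛ Λ hΛdeg)
  simp only [polyL2norm_eq_norm_polyL2 hTb]
  refine ⟨Λ * bubble v c, ?_, fun x hx => ?_, fun lam hlam => ?_, ?_, ?_⟩
  · exact (totalDegree_mul _ _).trans
      (add_le_add hΛdeg ((totalDegree_bubble_le v c).trans (by simp)))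
  · simp [← polyFun_apply, polyFun_bubble_eq_zero_of_mem_frontier hx]
  · simpa only [inner_polyL2, polyFun_apply] using hΛ lam hlam
  · exact (mul_le_of_le_one_left (norm_nonneg _) (inv_le_one_of_one_le₀ (le_max_right _ _))).trans
      (norm_le_norm_of_inner_eq_inner_self (hΛ q hq))
  · exact hupper.trans (mul_le_mul_of_nonneg_right (by simp) (norm_nonneg _))
end
end

section
/- For every integer k ≥ 0, the row-wise divergence map M ↦ (∂_x(x P₁) + ∂_y(y P₁), ∂_x(x P₂) + ∂_y(y P₂)) is a linear isomorphism from the space of 2×2 polynomial matrices {M : M_{ij} = x_j P_i with P₁, P₂ ∈ 𝒫²_k and x P₁ + y P₂ = 0, where (x₁, x₂) = (x, y)} onto the space {(−y q, x q) : q ∈ 𝒫²_{k−1}}. -/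
/-!
A trace-free pair has `x P₀ = -y P₁`; as `x` is prime and does not divide `y`, the pair is
`(-y q, x q)` for a unique `q`, and the degree bound `P ∈ 𝒫²_k` becomes `q ∈ 𝒫²_{k-1}`.
The product rule gives `div (x (x_i q)) = x_i (q + div (x q))`, so the row divergence sends
`(-y q, x q)` to `(-y L q, x L q)` with `L q = q + div (x q)`. On the monomial `x^a y^b` the
operator `L` is multiplication by `a + b + 3 ≠ 0`, hence a support-preserving bijection of each `𝒫²_m`.
-/

open MvPolynomial

noncomputable section

/-- Real polynomials in the two variables `x, y` (indexed `0, 1`). -/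
abbrev P2 := MvPolynomial (Fin 2) ℝ

/-- Membership in `𝒫²_m`, the space of polynomials of total degree at most `m`,
with the convention `𝒫²_m = {0}` for `m < 0`. -/
def memP2 (m : ℤ) (p : P2) : Prop := p = 0 ∨ (p.totalDegree : ℤ) ≤ m

/-- The row-wise divergence of the `2×2` matrix with entries `M i j = x_j * P i`:
its `i`-th component is `∂_x (x P_i) + ∂_y (y P_i)`. -/
def rowDiv2 (P : Fin 2 → P2) : Fin 2 → P2 := fun i => ∑ j : Fin 2, pderiv j (X j * P i)

namespace MvPolynomial

section CommSemiring

variable {σ R : Type*} [CommSemiring R]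

lemma coeff_X_mul_pderiv (i : σ) (p : MvPolynomial σ R) (s : σ →₀ ℕ) :
    coeff s (X i * pderiv i p) = s i * coeff s p := by
  classical
  induction p using induction_on' with
  | monomial t a =>
    rw [X_mul_pderiv_monomial, coeff_smul, coeff_monomial]
    split_ifs with h
    · subst h; rw [nsmul_eq_mul]
    · rw [smul_zero, mul_zero]
  | add p q hp hq => simp only [map_add, mul_add, coeff_add, hp, hq]

lemma pderiv_X_mul_self (i : σ) (p : MvPolynomial σ R) :
    pderiv i (X i * p) = p + X i * pderiv i p := by
  rw [Derivation.leibniz, pderiv_X_self, smul_eq_mul, smul_eq_mul, mul_one, add_comm]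

variable [Fintype σ]

def radialDiv : MvPolynomial σ R →ₗ[R] MvPolynomial σ R :=
  ∑ j, (pderiv j).toLinearMap ∘ₗ LinearMap.mulLeft R (X j)

lemma radialDiv_apply (p : MvPolynomial σ R) : radialDiv p = ∑ j, pderiv j (X j * p) := by
  simp [radialDiv]

lemma coeff_radialDiv (p : MvPolynomial σ R) (s : σ →₀ ℕ) :
    coeff s (radialDiv p) = (Fintype.card σ + s.degree) * coeff s p := by
  simp only [radialDiv_apply, pderiv_X_mul_self, coeff_sum, coeff_add, coeff_X_mul_pderiv,
    Finset.sum_add_distrib, Finset.sum_const, Finset.card_univ, nsmul_eq_mul,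
    ← Finset.sum_mul, Finsupp.degree_eq_sum, Nat.cast_sum, ← C_eq_coe_nat, coeff_C_mul]
  ring

lemma radialDiv_X_mul (i : σ) (p : MvPolynomial σ R) :
    radialDiv (X i * p) = X i * (p + radialDiv p) := by
  classical
  simp only [radialDiv_apply, mul_left_comm (X _) (X i), (pderiv _).leibniz (X i), pderiv_X,
    smul_eq_mul, Finset.sum_add_distrib, ← Finset.mul_sum, Pi.single_apply, mul_ite, mul_one,
    mul_zero, Finset.sum_ite_eq, Finset.mem_univ, if_true]
  ring

lemma coeff_add_radialDiv (p : MvPolynomial σ R) (s : σ →₀ ℕ) :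
    coeff s (p + radialDiv p) = (Fintype.card σ + 1 + s.degree) * coeff s p := by
  rw [coeff_add, coeff_radialDiv]
  ring

section CharZero

variable [CharZero R]

lemma cast_card_add_one_add_degree_ne_zero (s : σ →₀ ℕ) :
    (Fintype.card σ + 1 + s.degree : R) ≠ 0 := by
  exact_mod_cast (by omega : Fintype.card σ + 1 + s.degree ≠ 0)

lemma support_add_radialDiv [NoZeroDivisors R] (p : MvPolynomial σ R) :
    (p + radialDiv p).support = p.support := by
  ext s
  simp only [mem_support_iff, coeff_add_radialDiv, ne_eq, mul_eq_zero, not_or]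
  exact and_iff_right (cast_card_add_one_add_degree_ne_zero s)

lemma add_radialDiv_injective [IsDomain R] :
    Function.Injective fun p : MvPolynomial σ R => p + radialDiv p := by
  intro p q h
  ext s
  have hs := congrArg (coeff s) h
  simp only [coeff_add_radialDiv] at hs
  exact mul_left_cancel₀ (cast_card_add_one_add_degree_ne_zero s) hs

end CharZero

end CommSemiring

lemma exists_add_radialDiv_eq {σ K : Type*} [Fintype σ] [Field K] [CharZero K]
    (v : MvPolynomial σ K) : ∃ p, p + radialDiv p = v := by
  classical
  refine ⟨∑ s ∈ v.support, monomial s ((Fintype.card σ + 1 + s.degree : K)⁻¹ * coeff s v), ?_⟩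
  ext s
  rw [coeff_add_radialDiv, coeff_sum]
  simp only [coeff_monomial, Finset.sum_ite_eq', mem_support_iff]
  split_ifs with hs
  · rw [← mul_assoc, mul_inv_cancel₀ (cast_card_add_one_add_degree_ne_zero s), one_mul]
  · rw [mul_zero, not_not.mp hs]

lemma X_mul_add_X_mul_eq_zero_iff {σ R : Type*} [CommRing R] [IsDomain R] {i j : σ} (hij : i ≠ j)
    {a b : MvPolynomial σ R} : X i * a + X j * b = 0 ↔ ∃ q, a = -(X j * q) ∧ b = X i * q := by
  constructor
  · intro h
    have hdvd : X i ∣ X j * b := ⟨-a, by linear_combination h⟩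
    obtain ⟨q, rfl⟩ := (X_prime.dvd_mul.mp hdvd).resolve_left (by simpa using hij)
    refine ⟨q, mul_left_cancel₀ (X_ne_zero i) ?_, rfl⟩
    linear_combination h
  · rintro ⟨q, rfl, rfl⟩
    ring

end MvPolynomial

lemma memP2_congr_support {p q : P2} (h : p.support = q.support) (m : ℤ) :
    memP2 m p ↔ memP2 m q := by
  simp only [memP2, ← support_eq_empty, totalDegree, h]

lemma memP2_neg (m : ℤ) (p : P2) : memP2 m (-p) ↔ memP2 m p :=
  memP2_congr_support (support_neg _) m

lemma memP2_X_mul_iff (i : Fin 2) (m : ℤ) (q : P2) : memP2 m (X i * q) ↔ memP2 (m - 1) q := by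
  rcases eq_or_ne q 0 with rfl | hq
  · simp [memP2]
  · have hdeg := totalDegree_mul_of_isDomain (X_ne_zero i) hq
    rw [totalDegree_X] at hdeg
    simp only [memP2, mul_eq_zero, X_ne_zero, hq, false_or, hdeg]
    omega

lemma bijOn_add_radialDiv (m : ℤ) :
    Set.BijOn (fun q : P2 => q + radialDiv q) {q | memP2 m q} {q | memP2 m q} := by
  refine ⟨fun q hq => (memP2_congr_support (support_add_radialDiv q) m).mpr hq,
    add_radialDiv_injective.injOn, fun v hv => ?_⟩
  obtain ⟨q, rfl⟩ := exists_add_radialDiv_eq v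
  exact ⟨q, (memP2_congr_support (support_add_radialDiv q) m).mp hv, rfl⟩

/-- The field `(x, y)^⊥ q` of the paper. -/
def perpField (q : P2) : Fin 2 → P2 := ![-(X 1 * q), X 0 * q]

lemma perpField_injective : Function.Injective perpField := fun _ _ h =>
  mul_left_cancel₀ (X_ne_zero 0) (congrFun h 1)

lemma traceFree_iff_exists_perpField (P : Fin 2 → P2) :
    X 0 * P 0 + X 1 * P 1 = 0 ↔ ∃ q, perpField q = P := by
  rw [X_mul_add_X_mul_eq_zero_iff (by decide)]
  simp only [funext_iff, Fin.forall_fin_two, perpField, Matrix.cons_val_zero, Matrix.cons_val_one,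
    eq_comm]

lemma setOf_traceFree_eq_image_perpField (m : ℤ) :
    {P : Fin 2 → P2 | (∀ i, memP2 m (P i)) ∧ X 0 * P 0 + X 1 * P 1 = 0} =
      perpField '' {q | memP2 (m - 1) q} := by
  ext P
  rw [Set.mem_ofPred_eq, traceFree_iff_exists_perpField]
  constructor
  · rintro ⟨hdeg, q, rfl⟩
    exact ⟨q, (memP2_X_mul_iff 0 m q).mp (hdeg 1), rfl⟩
  · rintro ⟨q, hq, rfl⟩
    refine ⟨Fin.forall_fin_two.mpr ⟨?_, ?_⟩, q, rfl⟩
    · exact (memP2_neg m _).mpr ((memP2_X_mul_iff 1 m q).mpr hq)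
    · exact (memP2_X_mul_iff 0 m q).mpr hq

lemma rowDiv2_eq_compLeft : rowDiv2 = radialDiv.compLeft (Fin 2) := by
  funext P i
  simp [rowDiv2, radialDiv_apply]

lemma rowDiv2_perpField (q : P2) : rowDiv2 (perpField q) = perpField (q + radialDiv q) := by
  rw [rowDiv2_eq_compLeft]
  funext i
  fin_cases i <;> simp [perpField, radialDiv_X_mul]

/-- In two dimensions, the row-wise divergence is a linear isomorphism from the trace-free
space `{M : M i j = x_j P i, Pᵢ ∈ 𝒫²_k, x P₁ + y P₂ = 0}` (identified with the space of its
generating pairs) onto `{(-y q, x q) : q ∈ 𝒫²_{k-1}}`. -/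
theorem rowDiv2_isomorphism (k : ℕ) :
    (∀ P Q : Fin 2 → P2, rowDiv2 (P + Q) = rowDiv2 P + rowDiv2 Q) ∧
    (∀ (c : ℝ) (P : Fin 2 → P2), rowDiv2 (c • P) = c • rowDiv2 P) ∧
    Set.BijOn rowDiv2
      {P : Fin 2 → P2 | (∀ i, memP2 (k : ℤ) (P i)) ∧ X 0 * P 0 + X 1 * P 1 = 0}
      {v : Fin 2 → P2 | ∃ q : P2, memP2 ((k : ℤ) - 1) q ∧ v = ![-(X 1 * q), X 0 * q]} := by
  refine ⟨fun P Q => ?_, fun c P => ?_, ?_⟩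
  · rw [rowDiv2_eq_compLeft, map_add]
  · rw [rowDiv2_eq_compLeft, map_smul]
  have htarget : {v : Fin 2 → P2 | ∃ q : P2, memP2 ((k : ℤ) - 1) q ∧ v = ![-(X 1 * q), X 0 * q]} =
      perpField '' {q | memP2 ((k : ℤ) - 1) q} := by
    ext v
    exact exists_congr fun q => and_congr_right' eq_comm
  rw [setOf_traceFree_eq_image_perpField, htarget]
  exact Function.Semiconj.bijOn_image (fun q => (rowDiv2_perpField q).symm)
    (bijOn_add_radialDiv _) perpField_injective.injOn
end
end
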